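/- Let A* be an optimal delegation set (no outside option), let t_0 = max{b_i : i ∈ A*}, and let t_1 ≤ t_0. Let B denote the random bias b_{g(A*,v)} of the action chosen from A*, and let OPT([t_1,t_0]) = E[v_{g(A*,v)} | B ∈ [t_1,t_0]] (defined when Pr[B ∈ [t_1,t_0]] > 0). Then f(A_{t_0}) ≥ Pr[B ∈ [t_1,t_0]] · (OPT([t_1,t_0]) − (t_0 − t_1)) and f(A_{t_1}) ≥ (t_0 − t_1) · Pr[B ≤ t_1]. Consequently, if Pr[B ∈ [t_1,t_0]] ≥ 1/2 and Pr[B ≤ t_1] ≥ 1/2, then f(A_{t_0}) + f(A_{t_1}) ≥ (1/2)·OPT([t_1,t_0]), so max{f(A_{t_0}), f(A_{t_1})} ≥ (1/4)·OPT([t_1,t_0]). -/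

import Mathlib

open Finset

/-!
Delegated choice with **no outside option**.  There are `n` actions, indexed by
`Fin n`.  Action `i` has a known bias `b i`; the value profile `v : Fin n → ℝ`
is drawn from a finitely supported distribution with support `S` and probability
mass `p`.  From a nonempty menu `A` the agent picks an action maximizing
`v i + b i`, breaking ties in favor of larger value `v i`.
-/

/-- `g` is a valid agent choice function for biases `b` (no outside option):
from every nonempty menu `A` it picks an agent-utility-maximizing action,
breaking ties in favor of larger value. -/
def IsChoiceN (n : ℕ) (b : Fin n → ℝ)
    (g : Finset (Fin n) → (Fin n → ℝ) → Fin n) : Prop :=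
  ∀ (A : Finset (Fin n)) (v : Fin n → ℝ), A.Nonempty →
    g A v ∈ A ∧
    (∀ j ∈ A, v j + b j ≤ v (g A v) + b (g A v)) ∧
    (∀ j ∈ A, v j + b j = v (g A v) + b (g A v) → v j ≤ v (g A v))

/-- The principal's expected utility `f(A)` from menu `A`. -/
def utilN {n : ℕ} (S : Finset (Fin n → ℝ)) (p : (Fin n → ℝ) → ℝ)
    (g : Finset (Fin n) → (Fin n → ℝ) → Fin n) (A : Finset (Fin n)) : ℝ :=
  ∑ v ∈ S, p v * v (g A v)

/-- The threshold menu `A_t = {i : b i ≤ t}`. -/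
noncomputable def threshN (n : ℕ) (b : Fin n → ℝ) (t : ℝ) : Finset (Fin n) :=
  Finset.univ.filter fun i => b i ≤ t

/-- `S, p` is a finitely supported probability distribution over nonnegative value
profiles. -/
def ValidDistN {n : ℕ} (S : Finset (Fin n → ℝ)) (p : (Fin n → ℝ) → ℝ) : Prop :=
  (∀ v ∈ S, 0 ≤ p v) ∧ (∑ v ∈ S, p v = 1) ∧ ∀ v ∈ S, ∀ i, 0 ≤ v i

/-- The coordinates `v 1, …, v n` are mutually independent: the joint mass of
every profile is the product of the marginal masses of its coordinates. -/
def IndepValuesN {n : ℕ} (S : Finset (Fin n → ℝ)) (p : (Fin n → ℝ) → ℝ) : Prop :=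
  ∀ w : Fin n → ℝ,
    (∑ v ∈ S.filter fun v => v = w, p v)
      = ∏ i : Fin n, ∑ v ∈ S.filter fun v => v i = w i, p v

/-!
If the agent picks `j` from `A*` and `k` from a threshold menu `A_t` containing `j`, then
`v k + b k ≥ v j + b j` and `b k ≤ t`, so `v k ≥ v j + b j - t`.  When `b j ∈ [t₁, t₀]` and
`t = t₀` this loses at most `t₀ - t₁` of the value `v j`.  When `b j ≤ t₁` and `t = t₁`, the
choice from `A*` has agent utility at least that of an action of bias `t₀` (values are
nonnegative), so `v k ≥ t₀ - t₁`.  Averaging gives the two bounds; the combined bound follows by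
splitting on whether `OPT([t₁,t₀]) ≥ t₀ - t₁`.
-/

@[simp]
lemma mem_threshN {n : ℕ} {b : Fin n → ℝ} {t : ℝ} {i : Fin n} :
    i ∈ threshN n b t ↔ b i ≤ t := by
  simp [threshN]

lemma mul_div_le_of_nonneg {a b : ℝ} (hb : 0 ≤ b) : a * (b / a) ≤ b := by
  rcases eq_or_ne a 0 with rfl | ha
  · simpa using hb
  · rw [mul_div_cancel₀ b ha]

namespace IsChoiceN

variable {n : ℕ} {b : Fin n → ℝ} {g : Finset (Fin n) → (Fin n → ℝ) → Fin n}

lemma sup'_le_utility (hg : IsChoiceN n b g) {A : Finset (Fin n)} (hA : A.Nonempty)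
    {v : Fin n → ℝ} (hv : ∀ i, 0 ≤ v i) : A.sup' hA b ≤ v (g A v) + b (g A v) :=
  Finset.sup'_le hA b fun i hi => by
    linarith [hv i, (hg A v hA).2.1 i hi]

lemma add_sub_le_value_threshN (hg : IsChoiceN n b g) {t : ℝ} {v : Fin n → ℝ} {j : Fin n}
    (hj : b j ≤ t) : v j + b j - t ≤ v (g (threshN n b t) v) := by
  obtain ⟨hk, hmax, -⟩ := hg (threshN n b t) v ⟨j, mem_threshN.2 hj⟩
  linarith [mem_threshN.1 hk, hmax j (mem_threshN.2 hj)]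

end IsChoiceN

section Utility

variable {n : ℕ} {S : Finset (Fin n → ℝ)} {p : (Fin n → ℝ) → ℝ}
  {g : Finset (Fin n) → (Fin n → ℝ) → Fin n}

lemma ValidDistN.mul_apply_nonneg (hdist : ValidDistN S p) {v : Fin n → ℝ} (hv : v ∈ S)
    (i : Fin n) : 0 ≤ p v * v i :=
  mul_nonneg (hdist.1 v hv) (hdist.2.2 v hv i)

lemma utilN_nonneg (hdist : ValidDistN S p) (A : Finset (Fin n)) : 0 ≤ utilN S p g A :=
  sum_nonneg fun _ hv => hdist.mul_apply_nonneg hv _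

lemma sum_filter_mul_le_utilN (hdist : ValidDistN S p) {A : Finset (Fin n)}
    (P : (Fin n → ℝ) → Prop) [DecidablePred P] {c : (Fin n → ℝ) → ℝ}
    (hc : ∀ v ∈ S, P v → c v ≤ v (g A v)) :
    ∑ v ∈ S.filter P, p v * c v ≤ utilN S p g A :=
  calc ∑ v ∈ S.filter P, p v * c v
      ≤ ∑ v ∈ S.filter P, p v * v (g A v) :=
        sum_le_sum fun v hv => by
          obtain ⟨hvS, hPv⟩ := mem_filter.1 hv
          exact mul_le_mul_of_nonneg_left (hc v hvS hPv) (hdist.1 v hvS)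
    _ ≤ utilN S p g A :=
        sum_le_sum_of_subset_of_nonneg (filter_subset P S)
          fun _ hv _ => hdist.mul_apply_nonneg hv _

end Utility

lemma half_le_add_of_two_threshold_bounds {f₀ f₁ q qlo opt δ : ℝ} (hf₀ : 0 ≤ f₀) (hf₁ : 0 ≤ f₁)
    (hq : 1 / 2 ≤ q) (hqlo : 1 / 2 ≤ qlo)
    (h₀ : q * (opt - δ) ≤ f₀) (h₁ : δ * qlo ≤ f₁) : opt / 2 ≤ f₀ + f₁ := by
  have hf₀' : δ ≤ opt → (opt - δ) / 2 ≤ f₀ := fun h => by nlinarith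
  have hf₁' : 0 ≤ δ → δ / 2 ≤ f₁ := fun h => by nlinarith
  rcases le_total δ opt with hopt | hopt <;> rcases le_total 0 δ with hδ | hδ
  · linarith [hf₀' hopt, hf₁' hδ]
  · linarith [hf₀' hopt]
  · linarith [hf₁' hδ]
  · linarith

theorem two_threshold_lemma_general {n : ℕ} (b : Fin n → ℝ)
    (S : Finset (Fin n → ℝ)) (p : (Fin n → ℝ) → ℝ) (hdist : ValidDistN S p)
    (g : Finset (Fin n) → (Fin n → ℝ) → Fin n) (hg : IsChoiceN n b g)
    (Astar : Finset (Fin n)) (hA : Astar.Nonempty)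
    (t0 t1 : ℝ) (ht0 : t0 = Astar.sup' hA b)
    (q qlo OPTc : ℝ)
    (hq : q = ∑ v ∈ S.filter fun v => t1 ≤ b (g Astar v) ∧ b (g Astar v) ≤ t0, p v)
    (hqlo : qlo = ∑ v ∈ S.filter fun v => b (g Astar v) ≤ t1, p v)
    (hOPTc : OPTc =
      (∑ v ∈ S.filter fun v => t1 ≤ b (g Astar v) ∧ b (g Astar v) ≤ t0,
        p v * v (g Astar v)) / q) :
    q * (OPTc - (t0 - t1)) ≤ utilN S p g (threshN n b t0) ∧
    (t0 - t1) * qlo ≤ utilN S p g (threshN n b t1) ∧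
    (1 / 2 ≤ q → 1 / 2 ≤ qlo →
      OPTc / 2 ≤ utilN S p g (threshN n b t0) + utilN S p g (threshN n b t1) ∧
      OPTc / 4 ≤ max (utilN S p g (threshN n b t0)) (utilN S p g (threshN n b t1))) := by
  have hnum : q * OPTc ≤ ∑ v ∈ S.filter fun v => t1 ≤ b (g Astar v) ∧ b (g Astar v) ≤ t0,
      p v * v (g Astar v) := by
    rw [hOPTc]
    exact mul_div_le_of_nonneg <| sum_nonneg fun _ hv =>
      hdist.mul_apply_nonneg (mem_filter.1 hv).1 _
  have hmid : q * (OPTc - (t0 - t1)) ≤ ∑ v ∈ S.filter fun v => t1 ≤ b (g Astar v) ∧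
      b (g Astar v) ≤ t0, p v * (v (g Astar v) - (t0 - t1)) := by
    simp only [mul_sub, sum_sub_distrib, ← sum_mul, ← hq]
    linarith
  have hbound₀ : q * (OPTc - (t0 - t1)) ≤ utilN S p g (threshN n b t0) := by
    refine hmid.trans (sum_filter_mul_le_utilN hdist _ fun v _ hv => ?_)
    have hle : b (g Astar v) ≤ t0 := ht0 ▸ le_sup' b (hg Astar v hA).1
    linarith [hg.add_sub_le_value_threshN (v := v) hle, hv.1]
  have hbound₁ : (t0 - t1) * qlo ≤ utilN S p g (threshN n b t1) := by
    rw [hqlo, mul_sum]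
    simp only [mul_comm (t0 - t1)]
    refine sum_filter_mul_le_utilN hdist _ fun v hvS hv => ?_
    linarith [hg.add_sub_le_value_threshN (v := v) hv, hg.sup'_le_utility hA (hdist.2.2 v hvS)]
  refine ⟨hbound₀, hbound₁, fun hq2 hqlo2 => ?_⟩
  have hsum := half_le_add_of_two_threshold_bounds (utilN_nonneg hdist _) (utilN_nonneg hdist _)
    hq2 hqlo2 hbound₀ hbound₁
  refine ⟨hsum, ?_⟩
  linarith [hsum, le_max_left (utilN S p g (threshN n b t0)) (utilN S p g (threshN n b t1)),
    le_max_right (utilN S p g (threshN n b t0)) (utilN S p g (threshN n b t1))]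

/-- **two-threshold lemma.** Let `t₀ = max{b i : i ∈ A*}` and
`t₁ ≤ t₀`.  With `B = b_{g(A*,v)}`, `q = Pr[B ∈ [t₁,t₀]] > 0`,
`qlo = Pr[B ≤ t₁]`, and `OPTc = E[v_{g(A*,v)} | B ∈ [t₁,t₀]]`:
`f(A_{t₀}) ≥ q·(OPTc − (t₀ − t₁))` and `f(A_{t₁}) ≥ (t₀ − t₁)·qlo`; consequently,
if `q ≥ 1/2` and `qlo ≥ 1/2`, then `f(A_{t₀}) + f(A_{t₁}) ≥ OPTc/2` and
`max{f(A_{t₀}), f(A_{t₁})} ≥ OPTc/4`. -/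
theorem two_threshold_lemma {n : ℕ} (b : Fin n → ℝ)
    (S : Finset (Fin n → ℝ)) (p : (Fin n → ℝ) → ℝ) (hdist : ValidDistN S p)
    (g : Finset (Fin n) → (Fin n → ℝ) → Fin n) (hg : IsChoiceN n b g)
    (Astar : Finset (Fin n)) (hA : Astar.Nonempty)
    (hopt : ∀ A : Finset (Fin n), A.Nonempty → utilN S p g A ≤ utilN S p g Astar)
    (t0 t1 : ℝ) (ht0 : t0 = Astar.sup' hA b) (ht1 : t1 ≤ t0)
    (q qlo OPTc : ℝ)
    (hq : q = ∑ v ∈ S.filter fun v => t1 ≤ b (g Astar v) ∧ b (g Astar v) ≤ t0, p v)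
    (hqpos : 0 < q)
    (hqlo : qlo = ∑ v ∈ S.filter fun v => b (g Astar v) ≤ t1, p v)
    (hOPTc : OPTc =
      (∑ v ∈ S.filter fun v => t1 ≤ b (g Astar v) ∧ b (g Astar v) ≤ t0,
        p v * v (g Astar v)) / q) :
    q * (OPTc - (t0 - t1)) ≤ utilN S p g (threshN n b t0) ∧
    (t0 - t1) * qlo ≤ utilN S p g (threshN n b t1) ∧
    (1 / 2 ≤ q → 1 / 2 ≤ qlo →
      OPTc / 2 ≤ utilN S p g (threshN n b t0) + utilN S p g (threshN n b t1) ∧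
      OPTc / 4 ≤ max (utilN S p g (threshN n b t0)) (utilN S p g (threshN n b t1))) :=
  two_threshold_lemma_general b S p hdist g hg Astar hA t0 t1 ht0 q qlo OPTc hq hqlo hOPTc
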